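/- arXiv:2410.18476 — 3 statements merged into one kernel-verified Lean document; each statement's English description precedes it below -/
import Mathlib

section
/- If g(t) is a function admitting a Laurent expansion g(e^{-s}) = 2A₀/s³ + A₁/s² + O(1/s) as s → 0⁺, then for q > 0 and small ε, the function g_ε(t) = (1-t^q)/(1-t^{q+ε}) · g(t) has Laurent expansion with leading coefficients 2A₀q/(q+ε) in 1/s³ and (2A₀ε + 2A₁)q/(2(q+ε)) in 1/s². -/
/-!
With `t = e^{-s}` the perturbing factor is `r(s) = (1 - e^{-qs}) / (1 - e^{-(q+ε)s})`. The
second-order expansion `1 - e^{-as} = as - a²s²/2 + o(s²)` (l'Hôpital) gives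
`r(s) = q/(q+ε) + qε/(2(q+ε)) s + o(s)`, and multiplying this by
`g(e^{-s}) = 2A₀/s³ + A₁/s² + o(1/s²)` yields the two leading Laurent coefficients of `g_ε`.
-/

open Filter Topology Real

lemma hasDerivAt_one_sub_exp_neg_mul (a x : ℝ) :
    HasDerivAt (fun s => 1 - exp (-(a * s))) (a * exp (-(a * x))) x := by
  have hlin : HasDerivAt (fun s => -(a * s)) (-a) x :=
    ((hasDerivAt_id x).const_mul a).neg.congr_deriv (by simp)
  exact (hlin.exp.const_sub 1).congr_deriv (by ring)

lemma tendsto_one_sub_exp_neg_mul_div (a : ℝ) :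
    Tendsto (fun s => (1 - exp (-(a * s))) / s) (𝓝[≠] 0) (𝓝 a) := by
  have := hasDerivAt_iff_tendsto_slope.mp (hasDerivAt_one_sub_exp_neg_mul a 0)
  rw [mul_zero, neg_zero, exp_zero, mul_one] at this
  refine this.congr fun s => ?_
  simp [slope_def_field]

lemma tendsto_exp_neg_mul_sub_one_add_mul_div_sq (a : ℝ) :
    Tendsto (fun s => (exp (-(a * s)) - 1 + a * s) / s ^ 2) (𝓝[≠] 0) (𝓝 (a ^ 2 / 2)) := by
  have hnum (x : ℝ) : HasDerivAt (fun s => exp (-(a * s)) - 1 + a * s)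
      (a * (1 - exp (-(a * x)))) x := by
    have h := ((hasDerivAt_id x).const_mul a).sub (hasDerivAt_one_sub_exp_neg_mul a x)
    rw [mul_one, ← mul_one_sub] at h
    exact h.congr_of_eventuallyEq (.of_forall fun s => by simp only [Pi.sub_apply, id]; ring)
  have hden (x : ℝ) : HasDerivAt (fun s => s ^ 2) (2 * x) x := by
    simpa using hasDerivAt_pow 2 x
  have hcont : Continuous (fun s => exp (-(a * s)) - 1 + a * s) := by fun_prop
  refine HasDerivAt.lhopital_zero_nhdsNE (.of_forall hnum) (.of_forall hden) ?_ ?_ ?_ ?_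
  · filter_upwards [self_mem_nhdsWithin] with x hx
    simpa using hx
  · exact (hcont.tendsto' 0 0 (by simp)).mono_left nhdsWithin_le_nhds
  · exact ((continuous_pow 2).tendsto' 0 0 (by simp)).mono_left nhdsWithin_le_nhds
  · rw [show a ^ 2 / 2 = a / 2 * a by ring]
    exact ((tendsto_one_sub_exp_neg_mul_div a).const_mul (a / 2)).congr fun x => by ring

lemma one_sub_exp_neg_mul_ne_zero {b s : ℝ} (hb : b ≠ 0) (hs : s ≠ 0) :
    1 - exp (-(b * s)) ≠ 0 := by
  rw [sub_ne_zero, ne_comm, Ne, exp_eq_one_iff, neg_eq_zero]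
  exact mul_ne_zero hb hs

/-- With `t = e^{-s}` this is the factor `(1 - t^a) / (1 - t^b)`. -/
noncomputable def expRatio (a b s : ℝ) : ℝ := (1 - exp (-(a * s))) / (1 - exp (-(b * s)))

lemma tendsto_expRatio (a : ℝ) {b : ℝ} (hb : b ≠ 0) :
    Tendsto (expRatio a b) (𝓝[≠] 0) (𝓝 (a / b)) := by
  refine ((tendsto_one_sub_exp_neg_mul_div a).div
    (tendsto_one_sub_exp_neg_mul_div b) hb).congr' ?_
  filter_upwards [self_mem_nhdsWithin] with s hs
  exact div_div_div_cancel_right₀ hs _ _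

lemma tendsto_expRatio_sub_div (a : ℝ) {b : ℝ} (hb : b ≠ 0) :
    Tendsto (fun s => (expRatio a b s - a / b) / s) (𝓝[≠] 0) (𝓝 (a * (b - a) / (2 * b))) := by
  -- `b (1 - e^{-as}) - a (1 - e^{-bs})` is a combination of second-order remainders: the
  -- linear terms `a b s` cancel.
  have hnum := ((tendsto_exp_neg_mul_sub_one_add_mul_div_sq b).const_mul a).sub
    ((tendsto_exp_neg_mul_sub_one_add_mul_div_sq a).const_mul b)
  have hden := (tendsto_one_sub_exp_neg_mul_div b).const_mul b
  rw [show a * (b - a) / (2 * b) = (a * (b ^ 2 / 2) - b * (a ^ 2 / 2)) / (b * b) by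
    field_simp]
  refine (hnum.div hden (mul_ne_zero hb hb)).congr' ?_
  filter_upwards [self_mem_nhdsWithin] with s (hs : s ≠ 0)
  have := one_sub_exp_neg_mul_ne_zero hb hs
  simp only [expRatio, Pi.div_apply]
  field_simp
  ring

lemma tendsto_sq_mul_mul_sub_div_cube {l : Filter ℝ} {r G : ℝ → ℝ} {A B c d : ℝ}
    (hl : ∀ᶠ s in l, s ≠ 0) (hr : Tendsto r l (𝓝 c))
    (hr' : Tendsto (fun s => (r s - c) / s) l (𝓝 d))
    (hG : Tendsto (fun s => s ^ 2 * (G s - B / s ^ 3)) l (𝓝 A)) :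
    Tendsto (fun s => s ^ 2 * (r s * G s - c * B / s ^ 3)) l (𝓝 (c * A + B * d)) := by
  refine ((hr.mul hG).add (hr'.const_mul B)).congr' ?_
  filter_upwards [hl] with s hs
  field_simp
  ring

theorem perturbed_laurent_expansion_general (g : ℝ → ℝ) (A₀ A₁ q ε : ℝ)
    (hqε : 0 < q + ε)
    (h0 : Tendsto (fun s : ℝ => s ^ 3 * g (Real.exp (-s)))
      (𝓝[>] 0) (𝓝 (2 * A₀)))
    (h1 : Tendsto (fun s : ℝ => s ^ 2 * (g (Real.exp (-s)) - 2 * A₀ / s ^ 3))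
      (𝓝[>] 0) (𝓝 A₁)) :
    Tendsto (fun s : ℝ => s ^ 3 *
        ((1 - Real.exp (-s) ^ q) / (1 - Real.exp (-s) ^ (q + ε)) * g (Real.exp (-s))))
      (𝓝[>] 0) (𝓝 (2 * A₀ * q / (q + ε))) ∧
    Tendsto (fun s : ℝ => s ^ 2 *
        ((1 - Real.exp (-s) ^ q) / (1 - Real.exp (-s) ^ (q + ε)) * g (Real.exp (-s))
          - 2 * A₀ * q / (q + ε) / s ^ 3))
      (𝓝[>] 0) (𝓝 ((2 * A₀ * ε + 2 * A₁) * q / (2 * (q + ε)))) := by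
  have hpow (a s : ℝ) : exp (-s) ^ a = exp (-(a * s)) := by
    rw [← exp_mul, neg_mul, mul_comm]
  have hne : q + ε ≠ 0 := hqε.ne'
  have hr := (tendsto_expRatio q hne).mono_left (nhdsGT_le_nhdsNE 0)
  have hr' := (tendsto_expRatio_sub_div q hne).mono_left (nhdsGT_le_nhdsNE 0)
  have hs_ne : ∀ᶠ s : ℝ in 𝓝[>] 0, s ≠ 0 := eventually_mem_nhdsWithin.mono fun s hs => hs.ne'
  simp only [hpow]
  constructor
  · rw [show 2 * A₀ * q / (q + ε) = q / (q + ε) * (2 * A₀) by ring]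
    exact (hr.mul h0).congr fun s => by simp only [expRatio]; ring
  · rw [show (2 * A₀ * ε + 2 * A₁) * q / (2 * (q + ε))
      = q / (q + ε) * A₁ + 2 * A₀ * (q * (q + ε - q) / (2 * (q + ε))) by field_simp; ring]
    exact (tendsto_sq_mul_mul_sub_div_cube hs_ne hr hr' h1).congr fun s => by
      simp only [expRatio]; ring

/-- If `g(e^{-s}) = 2A₀/s³ + A₁/s² + O(1/s)` as `s → 0⁺`, then for `q > 0` and
small `ε` the perturbed function `gₑ(t) = (1-t^q)/(1-t^{q+ε})·g(t)` has Laurent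
expansion with leading coefficients `2A₀q/(q+ε)` in `1/s³` and
`q(2A₀ε + 2A₁)/(2(q+ε))` in `1/s²`. -/
theorem perturbed_laurent_expansion (g : ℝ → ℝ) (A₀ A₁ q ε : ℝ)
    (hq : 0 < q) (hqε : 0 < q + ε)
    (h0 : Tendsto (fun s : ℝ => s ^ 3 * g (Real.exp (-s)))
      (𝓝[>] 0) (𝓝 (2 * A₀)))
    (h1 : Tendsto (fun s : ℝ => s ^ 2 * (g (Real.exp (-s)) - 2 * A₀ / s ^ 3))
      (𝓝[>] 0) (𝓝 A₁)) :
    Tendsto (fun s : ℝ => s ^ 3 *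
        ((1 - Real.exp (-s) ^ q) / (1 - Real.exp (-s) ^ (q + ε)) * g (Real.exp (-s))))
      (𝓝[>] 0) (𝓝 (2 * A₀ * q / (q + ε))) ∧
    Tendsto (fun s : ℝ => s ^ 2 *
        ((1 - Real.exp (-s) ^ q) / (1 - Real.exp (-s) ^ (q + ε)) * g (Real.exp (-s))
          - 2 * A₀ * q / (q + ε) / s ^ 3))
      (𝓝[>] 0) (𝓝 ((2 * A₀ * ε + 2 * A₁) * q / (2 * (q + ε)))) :=
  perturbed_laurent_expansion_general g A₀ A₁ q ε hqε h0 h1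
end

section
/- The function g(t₁,t₂,t₃,t₄) = (1 - t₁²t₂²t₃²t₄²)(1 - t₁t₂t₃³t₄³) / ((1 - t₁²t₂²)(1 - t₁t₃³)(1 - t₃²t₄²)(1 - t₂t₄³)(1 - t₁t₂t₃t₄)), specialized via t₁ = t₂ = t^{(5-√7)/6} and t₃ = t₄ = t^{(1+√7)/6} with t = e^{-s}, has Laurent expansion (7√7 - 10)/(18s³) + (7√7 - 10)/(18s²) + O(1/s) as s → 0⁺. -/
/-!
Every factor `1 - e^{-w s}` of `G6` equals `w s · φ(w s)` with `φ(x) = (1 - e^{-x}) / x`, which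
extends across `0` with `φ(0) = 1` and `φ'(0) = -1/2`. With `aᵢ` the two numerator and `bⱼ` the five
denominator weights, `s³ G6(s) = F(s) := C ∏ φ(aᵢ s) / ∏ φ(bⱼ s)` where `C = ∏ aᵢ / ∏ bⱼ`, and
`F` is differentiable at `0`. The first two Laurent coefficients are then `F(0) = C` and
`F'(0) = C (∑ bⱼ - ∑ aᵢ) / 2`, and for this model `∑ bⱼ - ∑ aᵢ = 2`.
-/

open Filter Topology

/-- The Hilbert series of the mesonic moduli space of the `L^{1,3,1}/ℤ₂ (0,1,1,1)`
model, unrefined under the `U(1)_R` symmetry: `t_α = t^{r_α}` with `t = e^{-s}`,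
`r₁ = r₂ = (5-√7)/6`, `r₃ = r₄ = (1+√7)/6`. -/
noncomputable def G6 (s : ℝ) : ℝ :=
  let t1 : ℝ := Real.exp (-s) ^ ((5 - Real.sqrt 7) / 6)
  let t2 : ℝ := Real.exp (-s) ^ ((5 - Real.sqrt 7) / 6)
  let t3 : ℝ := Real.exp (-s) ^ ((1 + Real.sqrt 7) / 6)
  let t4 : ℝ := Real.exp (-s) ^ ((1 + Real.sqrt 7) / 6)
  ((1 - t1 ^ 2 * t2 ^ 2 * t3 ^ 2 * t4 ^ 2) * (1 - t1 * t2 * t3 ^ 3 * t4 ^ 3)) /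
    ((1 - t1 ^ 2 * t2 ^ 2) * (1 - t1 * t3 ^ 3) * (1 - t3 ^ 2 * t4 ^ 2) *
      (1 - t2 * t4 ^ 3) * (1 - t1 * t2 * t3 * t4))

open Real Finset

theorem tendsto_laurent_of_hasDerivAt {F G : ℝ → ℝ} {c : ℝ} {n : ℕ} (hF : HasDerivAt F c 0)
    (hFG : ∀ s ≠ 0, F s = s ^ (n + 1) * G s) :
    Tendsto (fun s => s ^ (n + 1) * G s) (𝓝[≠] 0) (𝓝 (F 0)) ∧
      Tendsto (fun s => s ^ n * (G s - F 0 / s ^ (n + 1))) (𝓝[≠] 0) (𝓝 c) := by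
  have hFG' : F =ᶠ[𝓝[≠] 0] fun s => s ^ (n + 1) * G s :=
    eventually_nhdsWithin_of_forall hFG
  refine ⟨(hF.continuousAt.tendsto.mono_left nhdsWithin_le_nhds).congr' hFG', ?_⟩
  refine (hasDerivAt_iff_tendsto_slope.mp hF).congr' ?_
  filter_upwards [self_mem_nhdsWithin] with s (hs : s ≠ 0)
  rw [slope_def_field, hFG s hs, sub_zero]
  field_simp
  ring

noncomputable def oneSubExpNegDiv (x : ℝ) : ℝ := if x = 0 then 1 else (1 - exp (-x)) / x

lemma oneSubExpNegDiv_zero : oneSubExpNegDiv 0 = 1 := if_pos rfl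

lemma mul_oneSubExpNegDiv (x : ℝ) : x * oneSubExpNegDiv x = 1 - exp (-x) := by
  by_cases hx : x = 0
  · simp [hx]
  · rw [oneSubExpNegDiv, if_neg hx, mul_div_cancel₀ _ hx]

lemma oneSubExpNegDiv_pos (x : ℝ) : 0 < oneSubExpNegDiv x := by
  rcases lt_trichotomy x 0 with hx | rfl | hx
  · rw [oneSubExpNegDiv, if_neg hx.ne]
    exact div_pos_of_neg_of_neg (by simpa using hx) hx
  · simp [oneSubExpNegDiv_zero]
  · rw [oneSubExpNegDiv, if_neg hx.ne']
    exact div_pos (by simpa using hx) hx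

lemma tendsto_one_sub_exp_neg_sub_div_sq :
    Tendsto (fun x => (1 - exp (-x) - x) / x ^ 2) (𝓝[≠] 0) (𝓝 (-(1 / 2))) := by
  have hexp (x : ℝ) : HasDerivAt (fun y => exp (-y)) (-exp (-x)) x := by
    simpa using (hasDerivAt_neg x).exp
  -- L'Hôpital: the quotient of derivatives is half the difference quotient of `e^{-x}` at `0`.
  have hslope := (hasDerivAt_iff_tendsto_slope.mp (hexp 0)).const_mul (1 / 2)
  refine HasDerivAt.lhopital_zero_nhdsNE (f' := fun x => exp (-x) - 1) (g' := fun x => 2 * x)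
    (.of_forall fun x => ?_) (.of_forall fun x => ?_) ?_ ?_ ?_ ?_
  · simpa using ((hasDerivAt_const x 1).fun_sub (hexp x)).fun_sub (hasDerivAt_id x)
  · simpa [mul_comm] using hasDerivAt_pow 2 x
  · filter_upwards [self_mem_nhdsWithin] with x (hx : x ≠ 0)
    simpa using hx
  · refine Tendsto.mono_left ?_ nhdsWithin_le_nhds
    exact ((continuous_const.sub (continuous_exp.comp continuous_neg)).sub continuous_id).tendsto'
      0 0 (by simp)
  · exact ((continuous_pow 2).tendsto' 0 0 (by simp)).mono_left nhdsWithin_le_nhds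
  · convert hslope using 2 with x
    · rw [slope_def_field]
      simp only [one_div, neg_zero, exp_zero, sub_zero]
      ring
    · simp

lemma hasDerivAt_oneSubExpNegDiv : HasDerivAt oneSubExpNegDiv (-(1 / 2)) 0 := by
  rw [hasDerivAt_iff_tendsto_slope]
  refine tendsto_one_sub_exp_neg_sub_div_sq.congr' ?_
  filter_upwards [self_mem_nhdsWithin] with x (hx : x ≠ 0)
  rw [slope_def_field, oneSubExpNegDiv_zero, oneSubExpNegDiv, if_neg hx]
  field_simp
  ring

section ExpFactorRatio

variable {ι κ : Type*} [Fintype ι] [Fintype κ]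

lemma prod_one_sub_exp_neg_mul (a : ι → ℝ) (s : ℝ) :
    ∏ i, (1 - exp (-(a i * s))) =
      s ^ Fintype.card ι * (∏ i, a i) * ∏ i, oneSubExpNegDiv (a i * s) := by
  simp_rw [← mul_oneSubExpNegDiv, prod_mul_distrib, prod_const, card_univ]
  ring

lemma hasDerivAt_prod_oneSubExpNegDiv (a : ι → ℝ) :
    HasDerivAt (fun s => ∏ i, oneSubExpNegDiv (a i * s)) (-(∑ i, a i) / 2) 0 := by
  classical
  have h (i : ι) : HasDerivAt (fun s => oneSubExpNegDiv (a i * s)) (-(1 / 2) * a i) 0 :=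
    hasDerivAt_oneSubExpNegDiv.comp_of_eq 0 (hasDerivAt_const_mul (a i)) (mul_zero _).symm
  refine (HasDerivAt.fun_finsetProd fun i (_ : i ∈ univ) => h i).congr_deriv ?_
  simp only [mul_zero, oneSubExpNegDiv_zero, prod_const_one, one_smul, ← mul_sum]
  ring

noncomputable def expFactorRatio (a : ι → ℝ) (b : κ → ℝ) (s : ℝ) : ℝ :=
  (∏ i, (1 - exp (-(a i * s)))) / ∏ j, (1 - exp (-(b j * s)))

theorem tendsto_laurent_expFactorRatio {n : ℕ} (a : ι → ℝ) (b : κ → ℝ) (hb : ∀ j, b j ≠ 0)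
    (hcard : Fintype.card κ = Fintype.card ι + (n + 1)) :
    Tendsto (fun s => s ^ (n + 1) * expFactorRatio a b s) (𝓝[≠] 0)
        (𝓝 ((∏ i, a i) / ∏ j, b j)) ∧
      Tendsto (fun s => s ^ n * (expFactorRatio a b s - (∏ i, a i) / (∏ j, b j) / s ^ (n + 1)))
        (𝓝[≠] 0) (𝓝 ((∏ i, a i) / (∏ j, b j) * ((∑ j, b j - ∑ i, a i) / 2))) := by
  set C := (∏ i, a i) / ∏ j, b j
  have hφb (s : ℝ) : ∏ j, oneSubExpNegDiv (b j * s) ≠ 0 :=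
    (prod_pos fun j _ => oneSubExpNegDiv_pos _).ne'
  set F : ℝ → ℝ := fun s =>
    C * ((∏ i, oneSubExpNegDiv (a i * s)) / ∏ j, oneSubExpNegDiv (b j * s))
  have hF0 : F 0 = C := by
    simp only [F, mul_zero, oneSubExpNegDiv_zero, prod_const_one, div_one, mul_one]
  have hF : HasDerivAt F (C * ((∑ j, b j - ∑ i, a i) / 2)) 0 := by
    refine (((hasDerivAt_prod_oneSubExpNegDiv a).fun_div (hasDerivAt_prod_oneSubExpNegDiv b)
      (hφb 0)).const_mul C).congr_deriv ?_
    simp only [mul_zero, oneSubExpNegDiv_zero, prod_const_one, mul_one, one_mul, one_pow, div_one]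
    ring
  have hFG (s : ℝ) (hs : s ≠ 0) : F s = s ^ (n + 1) * expFactorRatio a b s := by
    have hb' : ∏ j, b j ≠ 0 := prod_ne_zero_iff.mpr fun j _ => hb j
    have hPb := hφb s
    simp only [F, C]
    rw [expFactorRatio, prod_one_sub_exp_neg_mul, prod_one_sub_exp_neg_mul, hcard, pow_add]
    generalize ∏ i, oneSubExpNegDiv (a i * s) = Pa
    generalize ∏ j, oneSubExpNegDiv (b j * s) = Pb at hPb ⊢
    field_simp
    ring
  simpa only [hF0] using tendsto_laurent_of_hasDerivAt hF hFG

end ExpFactorRatio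

/- With `t₁ = t₂ = e^{-r₁ s}` and `t₃ = t₄ = e^{-r₃ s}`, the factors of `G6` are `1 - e^{-w s}` for
`w = 4 (r₁ + r₃), 2 r₁ + 6 r₃` in the numerator and `w = 4 r₁, r₁ + 3 r₃, 4 r₃, r₁ + 3 r₃,
2 (r₁ + r₃)` in the denominator. -/

noncomputable def g6NumWeights : Fin 2 → ℝ := ![4, (8 + 2 * √7) / 3]

noncomputable def g6DenWeights : Fin 5 → ℝ :=
  ![(10 - 2 * √7) / 3, (4 + √7) / 3, (2 + 2 * √7) / 3, (4 + √7) / 3, 2]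

lemma G6_eq_expFactorRatio (s : ℝ) : G6 s = expFactorRatio g6NumWeights g6DenWeights s := by
  have hpow (r : ℝ) : exp (-s) ^ r = exp (-(r * s)) := by
    rw [← exp_mul]; ring_nf
  rw [expFactorRatio, Fin.prod_univ_two, Fin.prod_univ_five]
  simp only [G6, hpow, ← exp_nat_mul, ← exp_add, g6NumWeights, g6DenWeights, Matrix.cons_val]
  ring_nf

lemma g6DenWeights_ne_zero (j : Fin 5) : g6DenWeights j ≠ 0 := by
  have h3 : √7 < 3 := by rw [sqrt_lt' (by norm_num)]; norm_num
  have := sqrt_nonneg 7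
  fin_cases j <;> simp [g6DenWeights] <;> linarith

lemma prod_g6NumWeights_div_prod_g6DenWeights :
    (∏ i, g6NumWeights i) / ∏ j, g6DenWeights j = (7 * √7 - 10) / 18 := by
  rw [div_eq_iff (prod_ne_zero_iff.mpr fun j _ => g6DenWeights_ne_zero j), Fin.prod_univ_two,
    Fin.prod_univ_five]
  simp only [g6NumWeights, g6DenWeights, Matrix.cons_val]
  -- the cofactor is the quotient of the difference of the two sides by `√7 ^ 2 - 7`
  linear_combination (-1568 / 729 - 184 / 243 * √7 + 8 / 81 * √7 ^ 2 + 28 / 729 * √7 ^ 3) *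
    sq_sqrt (show (0 : ℝ) ≤ 7 by norm_num)

lemma sum_g6DenWeights_sub_sum_g6NumWeights :
    ∑ j, g6DenWeights j - ∑ i, g6NumWeights i = 2 := by
  rw [Fin.sum_univ_two, Fin.sum_univ_five]
  simp only [g6NumWeights, g6DenWeights, Matrix.cons_val]
  ring

/-- The Laurent expansion of the Hilbert series is
`(7√7-10)/(18s³) + (7√7-10)/(18s²) + O(1/s)` as `s → 0⁺`. -/
theorem laurent_expansion_L131Z2 :
    Tendsto (fun s : ℝ => s ^ 3 * G6 s) (𝓝[>] 0)
      (𝓝 ((7 * Real.sqrt 7 - 10) / 18)) ∧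
    Tendsto (fun s : ℝ => s ^ 2 * (G6 s - (7 * Real.sqrt 7 - 10) / (18 * s ^ 3)))
      (𝓝[>] 0) (𝓝 ((7 * Real.sqrt 7 - 10) / 18)) := by
  obtain ⟨hlead, hnext⟩ := tendsto_laurent_expFactorRatio (n := 2) g6NumWeights g6DenWeights
    g6DenWeights_ne_zero (by simp)
  simp only [← G6_eq_expFactorRatio, prod_g6NumWeights_div_prod_g6DenWeights,
    sum_g6DenWeights_sub_sum_g6NumWeights, div_self (two_ne_zero' ℝ), mul_one, div_div, Nat.reduceAdd]
    at hlead hnext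
  exact ⟨hlead.mono_left (nhdsGT_le_nhdsNE 0), hnext.mono_left (nhdsGT_le_nhdsNE 0)⟩
end

section
/- The rational function g(t₁,t₂,t₃,t₄) = (1 - t₁²t₂²t₃²t₄²)(1 - t₁t₂t₃³t₄³)/((1 - t₁²t₂²)(1 - t₁t₃³)(1 - t₃²t₄²)(1 - t₂t₄³)(1 - t₁t₂t₃t₄)) is the Hilbert series of the ring C[x₁,...,x₅]/(x₁x₄ - x₃², x₃x₄ - x₂x₅) under the multigrading deg(x₁) = (2,2,0,0), deg(x₂) = (1,0,3,0), deg(x₃) = (1,1,1,1), deg(x₄) = (0,0,2,2), deg(x₅) = (0,1,0,3). -/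
/-!
All monomials of one multidegree coincide in `R = ℂ[x₁,…,x₅]/(x₁x₄ - x₃², x₃x₄ - x₂x₅)`:
trading `x₂x₅` for `x₃x₄` and then `x₁x₄` for `x₃²` turns every monomial into a standard one,
`x₁^a x₂^b x₃^c x₄^d x₅^e` with `ad = be = 0`, and a standard monomial is determined by its
multidegree. As no monomial vanishes in `R` (evaluate at `(1, …, 1)`), `dim R_v` is `1` on the
semigroup `S` of multidegrees of monomials and `0` off it. Writing `gᵢ = deg xᵢ`, every element
of `S` is uniquely `u + w + c g₃` with `u ∈ ℕg₁ ∪ ℕg₄` and `w ∈ ℕg₂ ∪ ℕg₅`, so the Hilbert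
series factors. Since `ℕg ∩ ℕh = 0`, the series of `ℕg ∪ ℕh` is
`1/(1-t^g) + 1/(1-t^h) - 1 = (1-t^{g+h})/((1-t^g)(1-t^h))`, which gives both numerator factors.
-/

noncomputable section

open MvPolynomial

/-- The ideal `(x₁x₄ - x₃², x₃x₄ - x₂x₅)` in `ℂ[x₁,…,x₅]` (variables indexed
`0,…,4`). -/
def mesIdeal : Ideal (MvPolynomial (Fin 5) ℂ) :=
  Ideal.span {X 0 * X 3 - X 2 ^ 2, X 2 * X 3 - X 1 * X 4}

/-- The coordinate ring `ℂ[x₁,…,x₅]/(x₁x₄ - x₃², x₃x₄ - x₂x₅)` of the mesonic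
moduli space of the `L^{1,3,1}/ℤ₂ (0,1,1,1)` model. -/
abbrev MesRing := MvPolynomial (Fin 5) ℂ ⧸ mesIdeal

/-- The multidegrees of the generators: `deg x₁ = (2,2,0,0)`, `deg x₂ = (1,0,3,0)`,
`deg x₃ = (1,1,1,1)`, `deg x₄ = (0,0,2,2)`, `deg x₅ = (0,1,0,3)`. -/
def genDeg : Fin 5 → (Fin 4 →₀ ℕ) :=
  ![Finsupp.equivFunOnFinite.symm ![2, 2, 0, 0],
    Finsupp.equivFunOnFinite.symm ![1, 0, 3, 0],
    Finsupp.equivFunOnFinite.symm ![1, 1, 1, 1],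
    Finsupp.equivFunOnFinite.symm ![0, 0, 2, 2],
    Finsupp.equivFunOnFinite.symm ![0, 1, 0, 3]]

/-- The multidegree of a monomial exponent vector. -/
def monDeg (e : Fin 5 →₀ ℕ) : Fin 4 →₀ ℕ := e.sum fun i k => k • genDeg i

/-- The graded piece of the quotient ring in multidegree `v`: the `ℂ`-span of
the images of the monomials of multidegree `v`. -/
def gradedPiece (v : Fin 4 →₀ ℕ) : Submodule ℂ MesRing :=
  Submodule.span ℂ
    ((Ideal.Quotient.mk mesIdeal) ''
      {m | ∃ e : Fin 5 →₀ ℕ, monDeg e = v ∧ m = MvPolynomial.monomial e (1 : ℂ)})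

/-- The multigraded Hilbert series `Σ_v dim_ℂ(R_v) t^v`. -/
def hilbertSeries : MvPowerSeries (Fin 4) ℚ :=
  fun v => (Module.finrank ℂ (gradedPiece v) : ℚ)

/-- The monomial `t₁^a t₂^b t₃^c t₄^d` as a multivariate power series. -/
def mon (a b c d : ℕ) : MvPowerSeries (Fin 4) ℚ :=
  MvPowerSeries.monomial (Finsupp.equivFunOnFinite.symm ![a, b, c, d]) 1

open Pointwise

namespace MvPowerSeries

variable {σ R : Type*}

def indicatorSeries [Semiring R] (s : Set (σ →₀ ℕ)) : MvPowerSeries σ R := s.indicator 1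

section Semiring

variable [Semiring R]

theorem coeff_indicatorSeries (s : Set (σ →₀ ℕ)) (v : σ →₀ ℕ) :
    coeff v (indicatorSeries s : MvPowerSeries σ R) = s.indicator 1 v :=
  rfl

theorem indicatorSeries_singleton (n : σ →₀ ℕ) :
    (indicatorSeries {n} : MvPowerSeries σ R) = monomial n 1 := by
  classical
  ext v
  simp only [coeff_indicatorSeries, coeff_monomial, Set.indicator_apply, Set.mem_singleton_iff,
    Pi.one_apply]

theorem indicatorSeries_zero_singleton :
    (indicatorSeries {0} : MvPowerSeries σ R) = 1 := by
  rw [indicatorSeries_singleton, monomial_zero_eq_C, map_one]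

theorem indicatorSeries_union_of_disjoint {s t : Set (σ →₀ ℕ)} (h : Disjoint s t) :
    (indicatorSeries (s ∪ t) : MvPowerSeries σ R) = indicatorSeries s + indicatorSeries t :=
  Set.indicator_union_of_disjoint h 1

theorem indicatorSeries_union_add_inter (s t : Set (σ →₀ ℕ)) :
    (indicatorSeries (s ∪ t) + indicatorSeries (s ∩ t) : MvPowerSeries σ R) =
      indicatorSeries s + indicatorSeries t :=
  Set.indicator_union_add_inter 1 s t

theorem indicatorSeries_add {s t : Set (σ →₀ ℕ)}
    (h : Set.InjOn (fun p => p.1 + p.2) (s ×ˢ t)) :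
    (indicatorSeries (s + t) : MvPowerSeries σ R) = indicatorSeries s * indicatorSeries t := by
  classical
  ext v
  simp only [coeff_mul, coeff_indicatorSeries, ← Set.indicator_prod_one]
  by_cases hv : v ∈ s + t
  · obtain ⟨x, hx, y, hy, rfl⟩ := Set.mem_add.mp hv
    rw [Set.indicator_of_mem hv, Finset.sum_eq_single_of_mem (x, y)
      (Finset.HasAntidiagonal.mem_antidiagonal.mpr rfl),
      Set.indicator_of_mem (Set.mk_mem_prod hx hy)]
    · rfl
    rintro p hp hne
    refine Set.indicator_of_notMem (fun hmem => hne ?_) _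
    exact h hmem (Set.mk_mem_prod hx hy) (Finset.HasAntidiagonal.mem_antidiagonal.mp hp)
  · rw [Set.indicator_of_notMem hv]
    refine (Finset.sum_eq_zero fun p hp => Set.indicator_of_notMem (fun hmem => hv ?_) _).symm
    exact Set.mem_add.mpr
      ⟨p.1, hmem.1, p.2, hmem.2, Finset.HasAntidiagonal.mem_antidiagonal.mp hp⟩

end Semiring

theorem indicatorSeries_add_mul_mul [CommSemiring R] {s t : Set (σ →₀ ℕ)}
    {p q P Q : MvPowerSeries σ R} (h : Set.InjOn (fun p => p.1 + p.2) (s ×ˢ t))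
    (hs : indicatorSeries s * p = P) (ht : indicatorSeries t * q = Q) :
    indicatorSeries (s + t) * (p * q) = P * Q := by
  rw [indicatorSeries_add h, ← hs, ← ht]
  ring

theorem indicatorSeries_range_nsmul_mul [CommRing R] {g : σ →₀ ℕ} (hg : g ≠ 0) :
    indicatorSeries (Set.range fun n : ℕ => n • g) * (1 - monomial g (1 : R)) = 1 := by
  set M : Set (σ →₀ ℕ) := Set.range fun n : ℕ => n • g
  have hsplit : M = {0} ∪ ({g} + M) := by
    ext x
    simp only [M, Set.singleton_add, Set.mem_union, Set.mem_singleton_iff, Set.mem_image,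
      Set.mem_range]
    constructor
    · rintro ⟨_ | n, rfl⟩
      · exact Or.inl (zero_smul ℕ g)
      · exact Or.inr ⟨n • g, ⟨n, rfl⟩, (succ_nsmul' g n).symm⟩
    · rintro (rfl | ⟨_, ⟨n, rfl⟩, rfl⟩)
      · exact ⟨0, zero_smul ℕ g⟩
      · exact ⟨n + 1, succ_nsmul' g n⟩
  have hdisj : Disjoint {0} ({g} + M) := by
    rw [Set.disjoint_singleton_left, Set.singleton_add]
    rintro ⟨x, -, hx⟩
    exact hg (add_eq_zero.mp hx).1
  have hinj : Set.InjOn (fun p => p.1 + p.2) ({g} ×ˢ M) := by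
    rintro ⟨g₁, x⟩ ⟨rfl, -⟩ ⟨g₂, y⟩ ⟨rfl, -⟩ hxy
    exact Prod.ext rfl (add_left_cancel hxy)
  have hrec : (indicatorSeries M : MvPowerSeries σ R) = 1 + monomial g 1 * indicatorSeries M := by
    conv_lhs => rw [hsplit]
    rw [indicatorSeries_union_of_disjoint hdisj, indicatorSeries_add hinj,
      indicatorSeries_zero_singleton, indicatorSeries_singleton]
  linear_combination hrec

theorem indicatorSeries_range_nsmul_union_mul [CommRing R] {g h : σ →₀ ℕ} (hg : g ≠ 0)
    (hh : h ≠ 0)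
    (hgh : (Set.range fun n : ℕ => n • g) ∩ (Set.range fun n : ℕ => n • h) = {0}) :
    indicatorSeries ((Set.range fun n : ℕ => n • g) ∪ Set.range fun n : ℕ => n • h) *
        ((1 - monomial g (1 : R)) * (1 - monomial h 1)) = 1 - monomial (g + h) 1 := by
  have hunion := indicatorSeries_union_add_inter (R := R) (Set.range fun n : ℕ => n • g)
    (Set.range fun n : ℕ => n • h)
  rw [hgh, indicatorSeries_zero_singleton] at hunion
  have hmul : monomial (g + h) (1 : R) = monomial g 1 * monomial h 1 := by
    rw [monomial_mul_monomial, one_mul]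
  linear_combination (1 - monomial g (1 : R)) * (1 - monomial h 1) * hunion + hmul +
    (1 - monomial h (1 : R)) * indicatorSeries_range_nsmul_mul (R := R) hg +
    (1 - monomial g (1 : R)) * indicatorSeries_range_nsmul_mul (R := R) hh

end MvPowerSeries

theorem range_nsmul_inter_range_nsmul_eq_singleton_zero {M : Type*} [AddMonoid M] {g h : M}
    (hgh : ∀ a d : ℕ, a • g = d • h → a • g = 0) :
    (Set.range fun n : ℕ => n • g) ∩ (Set.range fun n : ℕ => n • h) = {0} := by
  ext x
  constructor
  · rintro ⟨⟨a, rfl⟩, d, hd⟩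
    exact hgh a d hd.symm
  · rintro rfl
    exact ⟨⟨0, zero_smul ℕ g⟩, ⟨0, zero_smul ℕ h⟩⟩

theorem mem_range_nsmul_union_iff {M : Type*} [AddMonoid M] {g h x : M} :
    x ∈ (Set.range fun n : ℕ => n • g) ∪ (Set.range fun n : ℕ => n • h) ↔
      ∃ a d : ℕ, (a = 0 ∨ d = 0) ∧ a • g + d • h = x := by
  constructor
  · rintro (⟨a, rfl⟩ | ⟨d, rfl⟩)
    · exact ⟨a, 0, Or.inr rfl, by rw [zero_smul, add_zero]⟩
    · exact ⟨0, d, Or.inl rfl, by rw [zero_smul, zero_add]⟩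
  · rintro ⟨a, d, rfl | rfl, rfl⟩
    · exact Or.inr ⟨d, by rw [zero_smul, zero_add]⟩
    · exact Or.inl ⟨a, by rw [zero_smul, add_zero]⟩

def degOf (a b c d e : ℕ) : Fin 4 →₀ ℕ :=
  a • genDeg 0 + b • genDeg 1 + c • genDeg 2 + d • genDeg 3 + e • genDeg 4

theorem degOf_eq_degOf_iff {a b c d e a' b' c' d' e' : ℕ} :
    degOf a b c d e = degOf a' b' c' d' e' ↔
      2 * a + b + c = 2 * a' + b' + c' ∧ 2 * a + c + e = 2 * a' + c' + e' ∧
        3 * b + c + 2 * d = 3 * b' + c' + 2 * d' ∧ c + 2 * d + 3 * e = c' + 2 * d' + 3 * e' := by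
  simp only [degOf, genDeg, Finsupp.ext_iff, Fin.forall_fin_succ, Finsupp.coe_add,
    Finsupp.coe_smul, Finsupp.coe_equivFunOnFinite_symm, Pi.add_apply, Matrix.smul_cons,
    smul_eq_mul, mul_one, Matrix.smul_empty, Matrix.add_cons, Matrix.empty_add_empty,
    Matrix.head_cons, Matrix.tail_cons, Matrix.cons_val_zero, Matrix.cons_val_one, Matrix.cons_val,
    Matrix.cons_val_succ, Matrix.cons_val_fin_one, Fin.isValue, forall_const]
  omega

/-- `x₁^a x₂^b x₃^c x₄^d x₅^e` is divisible by neither `x₁x₄` nor `x₂x₅`, whatever `c` is. -/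
def IsStandard (a b d e : ℕ) : Prop := (a = 0 ∨ d = 0) ∧ (b = 0 ∨ e = 0)

theorem IsStandard.eq_of_degOf_eq {a b c d e a' b' c' d' e' : ℕ} (h : IsStandard a b d e)
    (h' : IsStandard a' b' d' e') (hdeg : degOf a b c d e = degOf a' b' c' d' e') :
    a = a' ∧ b = b' ∧ c = c' ∧ d = d' ∧ e = e' := by
  rw [degOf_eq_degOf_iff] at hdeg
  unfold IsStandard at h h'
  omega

theorem monDeg_eq_degOf (f : Fin 5 →₀ ℕ) :
    monDeg f = degOf (f 0) (f 1) (f 2) (f 3) (f 4) := by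
  rw [monDeg, Finsupp.sum_fintype _ _ fun i => zero_smul ℕ (genDeg i), Fin.sum_univ_five]
  rfl

namespace MesRing

def gen (i : Fin 5) : MesRing := Ideal.Quotient.mk mesIdeal (X i)

def mono (a b c d e : ℕ) : MesRing := gen 0 ^ a * gen 1 ^ b * gen 2 ^ c * gen 3 ^ d * gen 4 ^ e

theorem gen_zero_mul_gen_three : gen 0 * gen 3 = gen 2 ^ 2 := by
  rw [gen, gen, gen, ← map_mul, ← map_pow, Ideal.Quotient.eq]
  exact Ideal.subset_span (by simp)

theorem gen_two_mul_gen_three : gen 2 * gen 3 = gen 1 * gen 4 := by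
  simp only [gen, ← map_mul, Ideal.Quotient.eq]
  exact Ideal.subset_span (by simp)

theorem mono_add_add_eq_mono_add_two_mul (a b c d e j : ℕ) :
    mono (a + j) b c (d + j) e = mono a b (c + 2 * j) d e := by
  have h : (gen 0 * gen 3) ^ j = (gen 2 ^ 2) ^ j := by rw [gen_zero_mul_gen_three]
  simp only [mono]
  linear_combination gen 0 ^ a * gen 1 ^ b * gen 2 ^ c * gen 3 ^ d * gen 4 ^ e * h

theorem mono_add_add_eq_mono_add_add (a b c d e k : ℕ) :
    mono a (b + k) c d (e + k) = mono a b (c + k) (d + k) e := by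
  have h : (gen 1 * gen 4) ^ k = (gen 2 * gen 3) ^ k := by rw [gen_two_mul_gen_three]
  simp only [mono]
  linear_combination gen 0 ^ a * gen 1 ^ b * gen 2 ^ c * gen 3 ^ d * gen 4 ^ e * h

theorem mk_monomial_eq_mono (f : Fin 5 →₀ ℕ) :
    Ideal.Quotient.mk mesIdeal (monomial f (1 : ℂ)) = mono (f 0) (f 1) (f 2) (f 3) (f 4) := by
  rw [monomial_eq, C_1, one_mul, Finsupp.prod_fintype _ _ fun i => pow_zero (X i),
    Fin.prod_univ_five]
  simp only [map_mul, map_pow, mono, gen]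

theorem exists_isStandard (a b c d e : ℕ) :
    ∃ a' b' c' d' e', IsStandard a' b' d' e' ∧
      mono a b c d e = mono a' b' c' d' e' ∧ degOf a b c d e = degOf a' b' c' d' e' := by
  set k := min b e
  set j := min a (d + k)
  refine ⟨a - j, b - k, c + k + 2 * j, d + k - j, e - k, by unfold IsStandard; omega, ?_, ?_⟩
  · calc mono a b c d e = mono a (b - k + k) c d (e - k + k) := by
          rw [Nat.sub_add_cancel (min_le_left b e), Nat.sub_add_cancel (min_le_right b e)]
      _ = mono (a - j + j) (b - k) (c + k) (d + k - j + j) (e - k) := by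
          rw [mono_add_add_eq_mono_add_add, Nat.sub_add_cancel (min_le_left _ _),
            Nat.sub_add_cancel (min_le_right _ _)]
      _ = _ := by rw [mono_add_add_eq_mono_add_two_mul]
  · rw [degOf_eq_degOf_iff]
    omega

theorem mk_monomial_eq_of_monDeg_eq {f f' : Fin 5 →₀ ℕ} (h : monDeg f = monDeg f') :
    Ideal.Quotient.mk mesIdeal (monomial f (1 : ℂ)) =
      Ideal.Quotient.mk mesIdeal (monomial f' (1 : ℂ)) := by
  obtain ⟨a, b, c, d, e, hn, hmono, hdeg⟩ := exists_isStandard (f 0) (f 1) (f 2) (f 3) (f 4)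
  obtain ⟨a', b', c', d', e', hn', hmono', hdeg'⟩ :=
    exists_isStandard (f' 0) (f' 1) (f' 2) (f' 3) (f' 4)
  rw [monDeg_eq_degOf, monDeg_eq_degOf, hdeg, hdeg'] at h
  obtain ⟨rfl, rfl, rfl, rfl, rfl⟩ := hn.eq_of_degOf_eq hn' h
  rw [mk_monomial_eq_mono, mk_monomial_eq_mono, hmono, hmono']

theorem mk_monomial_ne_zero (f : Fin 5 →₀ ℕ) :
    Ideal.Quotient.mk mesIdeal (monomial f (1 : ℂ)) ≠ 0 := by
  have hle : mesIdeal ≤ RingHom.ker (eval fun _ : Fin 5 => (1 : ℂ)) := by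
    rw [mesIdeal, Ideal.span_le]
    rintro q (rfl | rfl) <;> simp [RingHom.mem_ker]
  intro h0
  have h1 := hle (Ideal.Quotient.eq_zero_iff_mem.mp h0)
  simp [RingHom.mem_ker, eval_monomial] at h1

end MesRing

open MesRing

open Classical in
theorem finrank_gradedPiece (v : Fin 4 →₀ ℕ) :
    Module.finrank ℂ (gradedPiece v) = if v ∈ Set.range monDeg then 1 else 0 := by
  split_ifs with hv
  · obtain ⟨f₀, rfl⟩ := hv
    have himg : (Ideal.Quotient.mk mesIdeal) ''
        {m | ∃ f, monDeg f = monDeg f₀ ∧ m = monomial f (1 : ℂ)} =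
          {Ideal.Quotient.mk mesIdeal (monomial f₀ 1)} := by
      refine Set.Subset.antisymm ?_
        (Set.singleton_subset_iff.mpr ⟨_, ⟨f₀, rfl, rfl⟩, rfl⟩)
      rintro _ ⟨_, ⟨f, hf, rfl⟩, rfl⟩
      exact mk_monomial_eq_of_monDeg_eq hf
    rw [gradedPiece, himg, finrank_span_singleton (mk_monomial_ne_zero f₀)]
  · have hempty : {m | ∃ f, monDeg f = v ∧ m = monomial f (1 : ℂ)} = ∅ :=
      Set.eq_empty_of_forall_notMem fun _ ⟨f, hf, _⟩ => hv ⟨f, hf⟩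
    rw [gradedPiece, hempty, Set.image_empty, Submodule.span_empty, finrank_bot]

theorem hilbertSeries_eq_indicatorSeries :
    hilbertSeries = MvPowerSeries.indicatorSeries (Set.range monDeg) := by
  classical
  ext v
  rw [MvPowerSeries.coeff_apply, hilbertSeries, finrank_gradedPiece,
    MvPowerSeries.coeff_indicatorSeries, Set.indicator_apply]
  split_ifs <;> simp

def genDegMultiples (i : Fin 5) : Set (Fin 4 →₀ ℕ) :=
  Set.range fun n : ℕ => n • genDeg i

theorem range_monDeg_eq :
    Set.range monDeg = (genDegMultiples 0 ∪ genDegMultiples 3) +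
      (genDegMultiples 1 ∪ genDegMultiples 4) + genDegMultiples 2 := by
  ext v
  constructor
  · rintro ⟨f, rfl⟩
    obtain ⟨a, b, c, d, e, ⟨had, hbe⟩, -, hdeg⟩ :=
      exists_isStandard (f 0) (f 1) (f 2) (f 3) (f 4)
    rw [monDeg_eq_degOf, hdeg]
    refine ⟨_, ⟨_, mem_range_nsmul_union_iff.mpr ⟨a, d, had, rfl⟩,
      _, mem_range_nsmul_union_iff.mpr ⟨b, e, hbe, rfl⟩, rfl⟩, _, ⟨c, rfl⟩, ?_⟩
    simp only [degOf]
    abel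
  · rintro ⟨_, ⟨_, hx, _, hy, rfl⟩, _, ⟨c, rfl⟩, rfl⟩
    obtain ⟨a, d, -, rfl⟩ := mem_range_nsmul_union_iff.mp hx
    obtain ⟨b, e, -, rfl⟩ := mem_range_nsmul_union_iff.mp hy
    refine ⟨Finsupp.equivFunOnFinite.symm ![a, b, c, d, e], ?_⟩
    rw [monDeg_eq_degOf]
    show degOf a b c d e = _
    simp only [degOf]
    abel

theorem genDeg_ne_zero (i : Fin 5) : genDeg i ≠ 0 := by
  fin_cases i <;> simp [genDeg, Finsupp.ext_iff, Fin.forall_fin_succ]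

theorem genDegMultiples_zero_inter_three : genDegMultiples 0 ∩ genDegMultiples 3 = {0} := by
  refine range_nsmul_inter_range_nsmul_eq_singleton_zero fun a d h => ?_
  have hdeg : degOf a 0 0 0 0 = degOf 0 0 0 d 0 := by simpa [degOf] using h
  obtain rfl : a = 0 := by rw [degOf_eq_degOf_iff] at hdeg; omega
  exact zero_smul ℕ _

theorem genDegMultiples_one_inter_four : genDegMultiples 1 ∩ genDegMultiples 4 = {0} := by
  refine range_nsmul_inter_range_nsmul_eq_singleton_zero fun b e h => ?_
  have hdeg : degOf 0 b 0 0 0 = degOf 0 0 0 0 e := by simpa [degOf] using h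
  obtain rfl : b = 0 := by rw [degOf_eq_degOf_iff] at hdeg; omega
  exact zero_smul ℕ _

theorem injOn_add_genDegMultiples_unions :
    Set.InjOn (fun p => p.1 + p.2)
      ((genDegMultiples 0 ∪ genDegMultiples 3) ×ˢ
        (genDegMultiples 1 ∪ genDegMultiples 4)) := by
  rintro ⟨x, y⟩ ⟨hx, hy⟩ ⟨x', y'⟩ ⟨hx', hy'⟩ hsum
  obtain ⟨a, d, had, rfl⟩ := mem_range_nsmul_union_iff.mp hx
  obtain ⟨b, e, hbe, rfl⟩ := mem_range_nsmul_union_iff.mp hy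
  obtain ⟨a', d', had', rfl⟩ := mem_range_nsmul_union_iff.mp hx'
  obtain ⟨b', e', hbe', rfl⟩ := mem_range_nsmul_union_iff.mp hy'
  have hdeg : degOf a b 0 d e = degOf a' b' 0 d' e' := by
    convert hsum using 1 <;> simp only [degOf, zero_smul] <;> abel
  obtain ⟨rfl, rfl, -, rfl, rfl⟩ :=
    IsStandard.eq_of_degOf_eq ⟨had, hbe⟩ ⟨had', hbe'⟩ hdeg
  rfl

theorem injOn_add_genDegMultiples_two :
    Set.InjOn (fun p => p.1 + p.2)
      (((genDegMultiples 0 ∪ genDegMultiples 3) + (genDegMultiples 1 ∪ genDegMultiples 4)) ×ˢ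
        genDegMultiples 2) := by
  rintro ⟨_, _⟩ ⟨⟨x, hx, y, hy, rfl⟩, c, rfl⟩ ⟨_, _⟩ ⟨⟨x', hx', y', hy', rfl⟩, c', rfl⟩
    hsum
  obtain ⟨a, d, had, rfl⟩ := mem_range_nsmul_union_iff.mp hx
  obtain ⟨b, e, hbe, rfl⟩ := mem_range_nsmul_union_iff.mp hy
  obtain ⟨a', d', had', rfl⟩ := mem_range_nsmul_union_iff.mp hx'
  obtain ⟨b', e', hbe', rfl⟩ := mem_range_nsmul_union_iff.mp hy'
  have hdeg : degOf a b c d e = degOf a' b' c' d' e' := by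
    convert hsum using 1 <;> simp only [degOf] <;> abel
  obtain ⟨rfl, rfl, rfl, rfl, rfl⟩ :=
    IsStandard.eq_of_degOf_eq ⟨had, hbe⟩ ⟨had', hbe'⟩ hdeg
  rfl

theorem mon_two_two_two_two :
    mon 2 2 2 2 = MvPowerSeries.monomial (genDeg 0 + genDeg 3) 1 := by
  refine congrArg (MvPowerSeries.monomial · 1) ?_
  ext i
  fin_cases i <;> rfl

theorem mon_one_one_three_three :
    mon 1 1 3 3 = MvPowerSeries.monomial (genDeg 1 + genDeg 4) 1 := by
  refine congrArg (MvPowerSeries.monomial · 1) ?_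
  ext i
  fin_cases i <;> rfl

open MvPowerSeries

/-- The rational function
`(1-t₁²t₂²t₃²t₄²)(1-t₁t₂t₃³t₄³)/((1-t₁²t₂²)(1-t₁t₃³)(1-t₃²t₄²)(1-t₂t₄³)(1-t₁t₂t₃t₄))`
is the Hilbert series of `ℂ[x₁,…,x₅]/(x₁x₄-x₃², x₃x₄-x₂x₅)` under the stated
multigrading, expressed as an identity of formal power series. -/
theorem hilbert_series_L131Z2 :
    hilbertSeries *
        ((1 - mon 2 2 0 0) * (1 - mon 1 0 3 0) * (1 - mon 0 0 2 2) *
          (1 - mon 0 1 0 3) * (1 - mon 1 1 1 1))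
      = (1 - mon 2 2 2 2) * (1 - mon 1 1 3 3) := by
  have h03 := indicatorSeries_range_nsmul_union_mul (R := ℚ) (genDeg_ne_zero 0)
    (genDeg_ne_zero 3) genDegMultiples_zero_inter_three
  have h14 := indicatorSeries_range_nsmul_union_mul (R := ℚ) (genDeg_ne_zero 1)
    (genDeg_ne_zero 4) genDegMultiples_one_inter_four
  have h2 := indicatorSeries_range_nsmul_mul (R := ℚ) (genDeg_ne_zero 2)
  have h := indicatorSeries_add_mul_mul injOn_add_genDegMultiples_two
    (indicatorSeries_add_mul_mul injOn_add_genDegMultiples_unions h03 h14) h2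
  rw [hilbertSeries_eq_indicatorSeries, range_monDeg_eq, mon_two_two_two_two,
    mon_one_one_three_three]
  change indicatorSeries _ * ((1 - MvPowerSeries.monomial (genDeg 0) 1) *
    (1 - MvPowerSeries.monomial (genDeg 1) 1) * (1 - MvPowerSeries.monomial (genDeg 3) 1) *
    (1 - MvPowerSeries.monomial (genDeg 4) 1) * (1 - MvPowerSeries.monomial (genDeg 2) 1)) = _
  linear_combination h

end
end
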